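/- (Exponential tail decay of the Modified Rician distribution.) Let α ≥ 0 and β > 0, and let X be a real random variable whose distribution is the Modified Rician distribution MR(α,β), with mean E X = α + β. Then there exist constants c₁ > 0 and c₂ > 0 (possibly depending on α and β) such that for every t ≥ 0, P( |X − E X| ≥ t ) ≤ c₁ · exp( −c₂ t ). -/

import Mathlib

open MeasureTheory Real

/-- The modified Bessel function of the first kind of order zero,
`I₀(x) = ∑_{k=0}^∞ (x/2)^{2k} / (k!)²`. -/
noncomputable def besselI0 (x : ℝ) : ℝ :=
  ∑' k : ℕ, (x / 2) ^ (2 * k) / ((Nat.factorial k : ℝ)) ^ 2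

/-- The Modified Rician density with parameters `α ≥ 0` and `β > 0`. -/
noncomputable def mrDensity (α β t : ℝ) : ℝ :=
  if 0 ≤ t then (1 / β) * Real.exp (-((t + α) / β)) * besselI0 (2 * Real.sqrt (t * α) / β)
  else 0

/-!
Since `(2k)! ≤ 4ᵏ (k!)²`, the series of `I₀` is dominated termwise by that of `cosh`, so
`I₀(y) ≤ e^{|y|}`. Writing `2√(tα) = t + α - (√t - √α)²`, the MR density is then at most
`β⁻¹ e^{-(√t - √α)²/β}`, which is `≤ β⁻¹ e^{-t/(4β)}` once `t ≥ 4α`. The density vanishes on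
the negative half-line, so far from the mean only the upper tail `[α + β + t, ∞)` carries mass,
and it is exponentially small; for small `t` the probability is simply bounded by `1`.
-/

open scoped Nat

theorem Nat.factorial_two_mul_le_four_pow_mul_sq (k : ℕ) : (2 * k)! ≤ 4 ^ k * k ! ^ 2 :=
  calc (2 * k)! = centralBinom k * (k ! * k !) := by
        rw [centralBinom_eq_two_mul_choose, ← mul_assoc,
          ← choose_mul_factorial_mul_factorial (by omega : k ≤ 2 * k), two_mul, Nat.add_sub_cancel]
    _ ≤ 4 ^ k * k ! ^ 2 := by rw [← sq]; gcongr; exact centralBinom_le_four_pow k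

theorem Real.cosh_le_exp_abs (x : ℝ) : cosh x ≤ exp |x| := by
  rw [← cosh_abs, cosh_eq]
  have : exp (-|x|) ≤ exp |x| := exp_le_exp.mpr (by linarith [abs_nonneg x])
  linarith

theorem besselI0_le_cosh (x : ℝ) : besselI0 x ≤ cosh x := by
  have hnonneg : ∀ k : ℕ, 0 ≤ (x / 2) ^ (2 * k) / (k ! : ℝ) ^ 2 := fun k =>
    div_nonneg ((even_two_mul k).pow_nonneg _) (by positivity)
  have hterm : ∀ k : ℕ, (x / 2) ^ (2 * k) / (k ! : ℝ) ^ 2 ≤ x ^ (2 * k) / ((2 * k)! : ℝ) := by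
    intro k
    have hfac : ((2 * k)! : ℝ) ≤ 4 ^ k * (k ! : ℝ) ^ 2 := by
      exact_mod_cast Nat.factorial_two_mul_le_four_pow_mul_sq k
    rw [div_pow, div_div, pow_mul 2, show (2 : ℝ) ^ 2 = 4 by norm_num]
    exact div_le_div_of_nonneg_left ((even_two_mul k).pow_nonneg x) (by positivity) hfac
  have hcosh := hasSum_cosh x
  rw [besselI0, ← hcosh.tsum_eq]
  exact (Summable.of_nonneg_of_le hnonneg hterm hcosh.summable).tsum_le_tsum hterm hcosh.summable

theorem mrDensity_of_neg (α β : ℝ) {t : ℝ} (ht : t < 0) : mrDensity α β t = 0 :=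
  if_neg ht.not_ge

theorem mrDensity_le_exp_neg_sq {α β t : ℝ} (hα : 0 ≤ α) (hβ : 0 < β) (ht : 0 ≤ t) :
    mrDensity α β t ≤ β⁻¹ * exp (-((√t - √α) ^ 2 / β)) := by
  have hsq : -((t + α) / β) + 2 * √(t * α) / β = -((√t - √α) ^ 2 / β) := by
    rw [sqrt_mul ht, sub_sq, sq_sqrt ht, sq_sqrt hα]; ring
  have hbessel : besselI0 (2 * √(t * α) / β) ≤ exp (2 * √(t * α) / β) := by
    refine (besselI0_le_cosh _).trans ?_
    simpa [abs_of_nonneg (by positivity : 0 ≤ 2 * √(t * α) / β)] using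
      cosh_le_exp_abs (2 * √(t * α) / β)
  rw [mrDensity, if_pos ht, one_div, ← hsq, exp_add, ← mul_assoc]
  gcongr

theorem mrDensity_le_exp_neg {α β t : ℝ} (hα : 0 ≤ α) (hβ : 0 < β) (ht : 4 * α ≤ t) :
    mrDensity α β t ≤ β⁻¹ * exp (-((4 * β)⁻¹ * t)) := by
  have ht0 : 0 ≤ t := by linarith
  refine (mrDensity_le_exp_neg_sq hα hβ ht0).trans ?_
  have hroot : 2 * √α ≤ √t := by
    rw [le_sqrt (by positivity) ht0, mul_pow, sq_sqrt hα]
    linarith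
  have hquarter : t / 4 ≤ (√t - √α) ^ 2 := by
    nlinarith [sq_sqrt ht0, sqrt_nonneg α]
  have hexponent : (4 * β)⁻¹ * t ≤ (√t - √α) ^ 2 / β :=
    calc (4 * β)⁻¹ * t = t / 4 / β := by ring
      _ ≤ (√t - √α) ^ 2 / β := by gcongr
  gcongr

theorem lintegral_Ici_ofReal_mul_exp_neg {a b C : ℝ} (hb : 0 < b) (hC : 0 ≤ C) :
    ∫⁻ x in Set.Ici a, ENNReal.ofReal (C * exp (-(b * x)))
      = ENNReal.ofReal (C / b * exp (-(b * a))) := by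
  rw [← restrict_Ioi_eq_restrict_Ici, ← ofReal_integral_eq_lintegral_ofReal]
  · have h := integral_comp_mul_left_Ioi (fun x => exp (-x)) a hb
    simp only [smul_eq_mul] at h
    rw [integral_const_mul, h, integral_exp_neg_Ioi]
    ring_nf
  · simpa [neg_mul] using (exp_neg_integrableOn_Ioi a hb).const_mul C
  · exact .of_forall fun x => by positivity

theorem withDensity_Ici_le_of_le_exp_neg {f : ℝ → ℝ} {a b C : ℝ} (hb : 0 < b) (hC : 0 ≤ C)
    (hf : ∀ x ∈ Set.Ici a, f x ≤ C * exp (-(b * x))) :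
    volume.withDensity (fun x => ENNReal.ofReal (f x)) (Set.Ici a)
      ≤ ENNReal.ofReal (C / b * exp (-(b * a))) := by
  rw [withDensity_apply _ measurableSet_Ici, ← lintegral_Ici_ofReal_mul_exp_neg hb hC]
  exact setLIntegral_mono' measurableSet_Ici fun x hx => ENNReal.ofReal_le_ofReal (hf x hx)

theorem withDensity_eq_zero_of_eqOn {E : Type*} [MeasurableSpace E] {μ : Measure E}
    {f : E → ℝ} {s : Set E}
    (hs : MeasurableSet s) (hf : Set.EqOn f 0 s) :
    μ.withDensity (fun x => ENNReal.ofReal (f x)) s = 0 := by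
  rw [withDensity_apply _ hs, setLIntegral_congr_fun hs (g := 0) fun x hx => by simp [hf hx]]
  exact lintegral_zero

theorem withDensity_mrDensity_abs_sub_ge_le {α β m t : ℝ} (hα : 0 ≤ α) (hβ : 0 < β)
    (hm : 0 ≤ m) (ht : m + 4 * α < t) :
    volume.withDensity (fun x => ENNReal.ofReal (mrDensity α β x)) {x | t ≤ |x - m|}
      ≤ ENNReal.ofReal (4 * exp (-(4 * β)⁻¹ * t)) := by
  set ν := volume.withDensity (fun x => ENNReal.ofReal (mrDensity α β x))
  have hsub : {x | t ≤ |x - m|} ⊆ Set.Iio 0 ∪ Set.Ici (m + t) := by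
    intro x hx
    rcases le_abs'.mp (Set.mem_ofPred.mp hx) with h | h
    · exact .inl (show x < 0 by linarith)
    · exact .inr (show m + t ≤ x by linarith)
  have hlower : ν (Set.Iio 0) = 0 :=
    withDensity_eq_zero_of_eqOn measurableSet_Iio fun x hx => mrDensity_of_neg α β hx
  have hupper : ν (Set.Ici (m + t)) ≤ ENNReal.ofReal (4 * exp (-((4 * β)⁻¹ * (m + t)))) := by
    convert withDensity_Ici_le_of_le_exp_neg (by positivity) (inv_nonneg.mpr hβ.le)
      fun x (hx : m + t ≤ x) => mrDensity_le_exp_neg hα hβ (by linarith) using 3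
    field_simp
  calc ν {x | t ≤ |x - m|} ≤ ν (Set.Iio 0) + ν (Set.Ici (m + t)) :=
        (measure_mono hsub).trans (measure_union_le _ _)
    _ ≤ ENNReal.ofReal (4 * exp (-(4 * β)⁻¹ * t)) := by
        rw [hlower, zero_add]
        refine hupper.trans (ENNReal.ofReal_le_ofReal ?_)
        gcongr
        nlinarith [inv_pos.mpr (by positivity : 0 < 4 * β)]

theorem exists_exp_bound_of_le_one {p : ℝ → ENNReal} (hp : ∀ t, p t ≤ 1) {A b T : ℝ}
    (hA : 0 < A) (hb : 0 < b) (htail : ∀ t, T < t → p t ≤ ENNReal.ofReal (A * exp (-b * t))) :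
    ∃ c₁ c₂ : ℝ, 0 < c₁ ∧ 0 < c₂ ∧ ∀ t : ℝ, p t ≤ ENNReal.ofReal (c₁ * exp (-c₂ * t)) := by
  refine ⟨max A (exp (b * T)), b, lt_max_of_lt_left hA, hb, fun t => ?_⟩
  rcases lt_or_ge T t with hT | hT
  · exact (htail t hT).trans (ENNReal.ofReal_le_ofReal (by gcongr; exact le_max_left _ _))
  · refine (hp t).trans (ENNReal.one_le_ofReal.mpr ?_)
    calc (1 : ℝ) ≤ exp (b * T) * exp (-b * t) := by
          rw [← exp_add]; exact one_le_exp (by nlinarith)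
      _ ≤ max A (exp (b * T)) * exp (-b * t) := by gcongr; exact le_max_right _ _

theorem mr_exponential_tail_general
    {Ω : Type*} [MeasurableSpace Ω] (P : Measure Ω) [IsProbabilityMeasure P]
    (α β : ℝ) (hα : 0 ≤ α) (hβ : 0 < β)
    (X : Ω → ℝ) (hX : Measurable X)
    (hlaw : Measure.map X P
      = (volume : Measure ℝ).withDensity (fun t => ENNReal.ofReal (mrDensity α β t))) :
    ∃ c₁ c₂ : ℝ, 0 < c₁ ∧ 0 < c₂ ∧ ∀ t : ℝ, 0 ≤ t →
      P {ω | t ≤ |X ω - (α + β)|} ≤ ENNReal.ofReal (c₁ * Real.exp (-c₂ * t)) := by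
  have htail : ∀ t, α + β + 4 * α < t →
      P {ω | t ≤ |X ω - (α + β)|} ≤ ENNReal.ofReal (4 * exp (-(4 * β)⁻¹ * t)) := fun t ht =>
    calc P {ω | t ≤ |X ω - (α + β)|} ≤ P.map X {x | t ≤ |x - (α + β)|} :=
          Measure.le_map_apply hX.aemeasurable _
      _ ≤ _ := hlaw ▸ withDensity_mrDensity_abs_sub_ge_le hα hβ (by positivity) ht
  obtain ⟨c₁, c₂, hc₁, hc₂, hbound⟩ :=
    exists_exp_bound_of_le_one (fun _ => prob_le_one) four_pos (by positivity) htail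
  exact ⟨c₁, c₂, hc₁, hc₂, fun t _ => hbound t⟩

/-- Exponential tail decay of the Modified Rician distribution: if `X ∼ MR(α,β)`,
with mean `E X = α + β`, then there are constants `c₁, c₂ > 0` such that
`P(|X − E X| ≥ t) ≤ c₁ exp(−c₂ t)` for all `t ≥ 0`. -/
theorem mr_exponential_tail
    {Ω : Type*} [MeasurableSpace Ω] (P : Measure Ω) [IsProbabilityMeasure P]
    (α β : ℝ) (hα : 0 ≤ α) (hβ : 0 < β)
    (X : Ω → ℝ) (hX : Measurable X)
    (hlaw : Measure.map X P
      = (volume : Measure ℝ).withDensity (fun t => ENNReal.ofReal (mrDensity α β t)))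
    (hmean : ∫ ω, X ω ∂P = α + β) :
    ∃ c₁ c₂ : ℝ, 0 < c₁ ∧ 0 < c₂ ∧ ∀ t : ℝ, 0 ≤ t →
      P {ω | t ≤ |X ω - (α + β)|} ≤ ENNReal.ofReal (c₁ * Real.exp (-c₂ * t)) :=
  mr_exponential_tail_general P α β hα hβ X hX hlaw
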